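/- Fix integers n ≥ 3 and δ ≥ 1 and a real constant a_n > 0, and let T(ρ) = ∫_ρ^1 (1−u²)^{(n−4)/2} du. Let (ρ_p)_{p} be a sequence in (0,1) such that ρ_p → 1 and p^{1/δ}(p−1)(1−ρ_p²)^{(n−2)/2} → e for some e ∈ (0, ∞) as p → ∞. Then Λ(ρ_p) := p·binom(p−1, δ)·(a_n T(ρ_p))^δ converges, as p → ∞, to ((e·a_n)/(n−2))^δ / δ!. -/

import Mathlib

/-!
On `[s, 1]` we have `s (1 - u²)^(β-1) ≤ u (1 - u²)^(β-1) ≤ (1 - u²)^(β-1)`, and the middle term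
integrates exactly to `(1 - s²)^β / (2β)`. Hence `s T(s) ≤ (1 - s²)^((n-2)/2) / (n-2) ≤ T(s)`, so
`T(s) ~ (1 - s²)^((n-2)/2) / (n-2)` as `s → 1⁻`. Writing `m = p - 1`,
`Λ(ρ_p) = C(m, δ) x_m^δ` with `x_m = p^(1/δ) a T(ρ_p)`, and the scaling hypothesis says exactly
that `m x_m → e a / (n-2)`; the binomial part of the Poisson limit theorem finishes the proof.
-/

open Real Filter Topology Set intervalIntegral MeasureTheory

lemma intervalIntegrable_one_sub_sq_rpow {r : ℝ} (hr : -1 < r) {s : ℝ} (hs : -1 < s)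
    (hs1 : s ≤ 1) : IntervalIntegrable (fun u => (1 - u ^ 2) ^ r) volume s 1 := by
  have h_sub : IntervalIntegrable (fun u => (1 - u) ^ r) volume s 1 := by
    simpa using (intervalIntegrable_rpow' (a := 1 - s) (b := 0) hr).comp_sub_left 1
  have h_add : ContinuousOn (fun u => (1 + u) ^ r) (uIcc s 1) := by
    refine ContinuousOn.rpow_const (by fun_prop) fun u hu => Or.inl ?_
    rw [uIcc_of_le hs1] at hu
    linarith [hu.1]
  refine (h_sub.mul_continuousOn h_add).congr fun u hu => ?_
  rw [uIoc_of_le hs1] at hu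
  rw [← mul_rpow (by linarith [hu.2]) (by linarith [hu.1])]
  ring_nf

section

variable {β : ℝ} (hβ : 0 < β) {s : ℝ} (hs : -1 < s) (hs1 : s ≤ 1)
include hβ hs hs1

lemma integral_mul_one_sub_sq_rpow :
    ∫ u in s..1, u * (1 - u ^ 2) ^ (β - 1) = (1 - s ^ 2) ^ β / (2 * β) := by
  have hF : ∀ u ∈ Ioo s 1, HasDerivAt (fun u => -(1 - u ^ 2) ^ β / (2 * β))
      (u * (1 - u ^ 2) ^ (β - 1)) u := by
    intro u hu
    have hpos : 0 < 1 - u ^ 2 := by nlinarith [hu.1, hu.2]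
    have h : HasDerivAt (fun u => -(1 - u ^ 2) ^ β / (2 * β))
        (-(-(2 * u) * β * (1 - u ^ 2) ^ (β - 1)) / (2 * β)) u := by
      have h2 : HasDerivAt (fun u : ℝ => 1 - u ^ 2) (-(2 * u)) u := by
        simpa using (hasDerivAt_pow 2 u).const_sub 1
      exact ((h2.rpow_const (Or.inl hpos.ne')).neg).div_const _
    convert h using 1
    field_simp
  have hcont : ContinuousOn (fun u : ℝ => -(1 - u ^ 2) ^ β / (2 * β)) (Icc s 1) :=
    ((ContinuousOn.rpow_const (by fun_prop) fun _ _ => Or.inr hβ.le).neg).div_const _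
  have hint : IntervalIntegrable (fun u => u * (1 - u ^ 2) ^ (β - 1)) volume s 1 :=
    (intervalIntegrable_one_sub_sq_rpow (by linarith) hs hs1).continuousOn_mul
      continuousOn_id
  rw [integral_eq_sub_of_hasDerivAt_of_le hs1 hcont hF hint]
  simp only [one_pow, sub_self, zero_rpow hβ.ne', neg_zero, zero_div, zero_sub]
  ring

lemma integral_mul_one_sub_sq_rpow_le_integral :
    ∫ u in s..1, u * (1 - u ^ 2) ^ (β - 1) ≤ ∫ u in s..1, (1 - u ^ 2) ^ (β - 1) := by
  have hint := intervalIntegrable_one_sub_sq_rpow (r := β - 1) (by linarith) hs hs1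
  refine integral_mono_on hs1 (hint.continuousOn_mul continuousOn_id) hint fun u hu => ?_
  have hnonneg : 0 ≤ (1 - u ^ 2) ^ (β - 1) := rpow_nonneg (by nlinarith [hu.1, hu.2]) _
  simpa using mul_le_of_le_one_left hnonneg hu.2

lemma mul_integral_le_integral_mul_one_sub_sq_rpow :
    s * ∫ u in s..1, (1 - u ^ 2) ^ (β - 1) ≤ ∫ u in s..1, u * (1 - u ^ 2) ^ (β - 1) := by
  have hint := intervalIntegrable_one_sub_sq_rpow (r := β - 1) (by linarith) hs hs1
  rw [← intervalIntegral.integral_const_mul]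
  refine integral_mono_on hs1 (hint.const_mul s) (hint.continuousOn_mul continuousOn_id)
    fun u hu => ?_
  have hnonneg : 0 ≤ (1 - u ^ 2) ^ (β - 1) := rpow_nonneg (by nlinarith [hu.1, hu.2]) _
  exact mul_le_mul_of_nonneg_right hu.1 hnonneg

end

theorem tendsto_integral_one_sub_sq_rpow_div {β : ℝ} (hβ : 0 < β) :
    Tendsto (fun s => (∫ u in s..1, (1 - u ^ 2) ^ (β - 1)) / ((1 - s ^ 2) ^ β / (2 * β)))
      (𝓝[<] 1) (𝓝 1) := by
  have h_inv : Tendsto (fun s : ℝ => 1 / s) (𝓝[<] 1) (𝓝 1) := by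
    simpa using ((continuous_id.tendsto (1 : ℝ)).inv₀ one_ne_zero).mono_left nhdsWithin_le_nhds
  have h_bounds : ∀ s ∈ Ioo (0 : ℝ) 1,
      1 ≤ (∫ u in s..1, (1 - u ^ 2) ^ (β - 1)) / ((1 - s ^ 2) ^ β / (2 * β)) ∧
      (∫ u in s..1, (1 - u ^ 2) ^ (β - 1)) / ((1 - s ^ 2) ^ β / (2 * β)) ≤ 1 / s := by
    rintro s ⟨hs0, hs1⟩
    have hs : -1 < s := by linarith
    have hI : 0 < (1 - s ^ 2) ^ β / (2 * β) :=
      div_pos (rpow_pos_of_pos (by nlinarith) _) (by positivity)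
    rw [← integral_mul_one_sub_sq_rpow hβ hs hs1.le] at hI ⊢
    rw [le_div_iff₀ hI, one_mul, div_le_div_iff₀ hI hs0, one_mul, mul_comm]
    exact ⟨integral_mul_one_sub_sq_rpow_le_integral hβ hs hs1.le,
      mul_integral_le_integral_mul_one_sub_sq_rpow hβ hs hs1.le⟩
  have h_mem := Ioo_mem_nhdsLT (zero_lt_one' ℝ)
  exact tendsto_of_tendsto_of_tendsto_of_le_of_le' tendsto_const_nhds h_inv
    (mem_of_superset h_mem fun s hs => (h_bounds s hs).1)
    (mem_of_superset h_mem fun s hs => (h_bounds s hs).2)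

theorem Lambda_tendsto_general (n δ : ℕ) (hn : 3 ≤ n) (hδ : 1 ≤ δ)
    (a : ℝ)
    (ρ : ℕ → ℝ) (hρ : ∀ p, ρ p ∈ Set.Ioo (0 : ℝ) 1)
    (hρ1 : Filter.Tendsto ρ Filter.atTop (nhds 1))
    (e : ℝ)
    (hscale : Filter.Tendsto
      (fun p : ℕ => (p : ℝ) ^ ((1 : ℝ) / (δ : ℝ)) * ((p : ℝ) - 1) *
        (1 - (ρ p) ^ 2) ^ (((n : ℝ) - 2) / 2))
      Filter.atTop (nhds e)) :
    Filter.Tendsto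
      (fun p : ℕ => (p : ℝ) * ((p - 1).choose δ : ℝ) *
        (a * ∫ u in (ρ p)..1, (1 - u ^ 2) ^ (((n : ℝ) - 4) / 2)) ^ δ)
      Filter.atTop
      (nhds ((e * a / ((n : ℝ) - 2)) ^ δ / (Nat.factorial δ : ℝ))) := by
  have hn2 : (0 : ℝ) < n - 2 := by
    have : (3 : ℝ) ≤ n := by exact_mod_cast hn
    linarith
  set B : ℕ → ℝ := fun p => (1 - ρ p ^ 2) ^ (((n : ℝ) - 2) / 2)
  set T : ℕ → ℝ := fun p => ∫ u in (ρ p)..1, (1 - u ^ 2) ^ (((n : ℝ) - 4) / 2)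
  have hB : ∀ p, B p ≠ 0 := fun p =>
    (rpow_pos_of_pos (by nlinarith [(hρ p).1, (hρ p).2]) _).ne'
  have hT : Tendsto (fun p => T p / (B p / (n - 2))) atTop (𝓝 1) := by
    have hρ' : Tendsto ρ atTop (𝓝[<] 1) :=
      tendsto_nhdsWithin_of_tendsto_nhds_of_eventually_within _ hρ1
        (Eventually.of_forall fun p => (hρ p).2)
    have h := (tendsto_integral_one_sub_sq_rpow_div
      (β := ((n : ℝ) - 2) / 2) (by linarith)).comp hρ'
    rwa [show ((n : ℝ) - 2) / 2 - 1 = (n - 4) / 2 by ring,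
      show 2 * (((n : ℝ) - 2) / 2) = n - 2 by ring] at h
  have h_shift : Tendsto
      (fun m : ℕ => (m : ℝ) * (((m + 1 : ℕ) : ℝ) ^ ((1 : ℝ) / δ) * (a * T (m + 1))))
      atTop (𝓝 (e * a / (n - 2))) := by
    have h := (((hscale.mul hT).mul_const a).div_const ((n : ℝ) - 2))
    rw [mul_one, ← tendsto_add_atTop_iff_nat 1] at h
    refine h.congr fun m => ?_
    field_simp [hB (m + 1)]
    push_cast
    ring
  rw [← tendsto_add_atTop_iff_nat 1]
  refine (ProbabilityTheory.tendsto_choose_mul_pow_atTop δ h_shift).congr fun m => ?_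
  rw [mul_pow, mul_pow, one_div, rpow_inv_natCast_pow (Nat.cast_nonneg _) (by omega)]
  simp only [Nat.add_sub_cancel]
  ring

/-- Fix integers `n ≥ 3`, `δ ≥ 1` and a constant `a_n > 0`, and let
`T(ρ) = ∫_ρ^1 (1 - u²)^((n-4)/2) du`. If `(ρ_p) ⊆ (0,1)`, `ρ_p → 1`, and
`p^(1/δ)·(p-1)·(1-ρ_p²)^((n-2)/2) → e ∈ (0,∞)`, then
`Λ(ρ_p) = p·binom(p-1, δ)·(a_n T(ρ_p))^δ → ((e·a_n)/(n-2))^δ / δ!`. -/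
theorem Lambda_tendsto (n δ : ℕ) (hn : 3 ≤ n) (hδ : 1 ≤ δ)
    (a : ℝ) (ha : 0 < a)
    (ρ : ℕ → ℝ) (hρ : ∀ p, ρ p ∈ Set.Ioo (0 : ℝ) 1)
    (hρ1 : Filter.Tendsto ρ Filter.atTop (nhds 1))
    (e : ℝ) (he : 0 < e)
    (hscale : Filter.Tendsto
      (fun p : ℕ => (p : ℝ) ^ ((1 : ℝ) / (δ : ℝ)) * ((p : ℝ) - 1) *
        (1 - (ρ p) ^ 2) ^ (((n : ℝ) - 2) / 2))
      Filter.atTop (nhds e)) :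
    Filter.Tendsto
      (fun p : ℕ => (p : ℝ) * ((p - 1).choose δ : ℝ) *
        (a * ∫ u in (ρ p)..1, (1 - u ^ 2) ^ (((n : ℝ) - 4) / 2)) ^ δ)
      Filter.atTop
      (nhds ((e * a / ((n : ℝ) - 2)) ^ δ / (Nat.factorial δ : ℝ))) :=
  Lambda_tendsto_general n δ hn hδ a ρ hρ hρ1 e hscale
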